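/- Fix ε > 0, m ≥ 0. For all x, t, t' ∈ εℤ with t > t' > 0: a1(x,t) = Σ_{x' ∈ εℤ} [a2(x',t')·a1(x−x'+ε, t−t'+ε) + a1(x',t')·a2(x'−x+ε, t−t'+ε)] and a2(x,t) = Σ_{x' ∈ εℤ} [a2(x',t')·a2(x−x'+ε, t−t'+ε) − a1(x',t')·a1(x'−x+ε, t−t'+ε)], where all functions are evaluated at mass m and lattice step ε. -/

import Mathlib

open scoped BigOperators

noncomputable section

/-- Endpoint `x`-coordinate of a checker path of `n` steps encoded by step directions:
`true` = step `(1,1)`, `false` = step `(-1,1)`. -/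
def endpt {n : ℕ} (d : Fin n → Bool) : ℤ :=
  ∑ i, (if d i then (1 : ℤ) else -1)

/-- The number of turns of a checker path encoded by step directions. -/
def turns {n : ℕ} (d : Fin n → Bool) : ℕ :=
  ((Finset.range n).filter fun i =>
    ∃ h : i + 1 < n, d ⟨i, Nat.lt_of_succ_lt h⟩ ≠ d ⟨i + 1, h⟩).card

/-- Checker paths from `(0,0)` to `(x,n)` with the first step to `(1,1)`,
encoded by their step directions. -/
def pathsTo (x : ℤ) (n : ℕ) : Finset (Fin n → Bool) :=
  Finset.univ.filter fun d => (∃ h : 0 < n, d ⟨0, h⟩ = true) ∧ endpt d = x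

/-- Feynman checkers with mass `m` and lattice step `ε`: the value `a(εx, εt, m, ε)`,
where `x t : ℤ` are the coordinates in units of `ε`. -/
def am (x t : ℤ) (m ε : ℝ) : ℂ :=
  (1 + m ^ 2 * ε ^ 2 : ℂ) ^ ((1 - (t : ℂ)) / 2) * Complex.I *
    ∑ d ∈ pathsTo x t.toNat, (-Complex.I * (m * ε)) ^ turns d

/-- The basic model: `a(x,t)`. -/
def a (x t : ℤ) : ℂ :=
  (2 : ℂ) ^ ((1 - (t : ℂ)) / 2) * Complex.I *
    ∑ d ∈ pathsTo x t.toNat, (-Complex.I) ^ turns d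

/-!
Let `S(x, n)` be the sum of `(-i m ε)^turns` over the checker paths of `n` steps to `x` starting
upwards-right, so that `a = (1 + m²ε²)^((1-t)/2) · i · S`. A path starting upwards-right has an
even number of turns exactly when its last step is upwards-right, so `Re S` collects the paths
ending upwards-right and `i Im S` those ending upwards-left. Splitting off the last step then gives
the lattice Dirac equation
  `Re S(x, n+2) = Re S(x-1, n+1) + mε Im S(x-1, n+1)`,
  `Im S(x, n+2) = Im S(x+1, n+1) - mε Re S(x+1, n+1)`.
Both sides of Huygens' principle satisfy this recursion in `t` and agree for `t = t'`, where the
kernel `S(·, 1)` is a Kronecker delta; the normalising powers of `1 + m²ε²` multiply out because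
`(1 - t') + (1 - (t - t' + 1)) = 1 - t`. The sums over `x'` are finite since `S(x', t')`
vanishes outside the light cone `|x'| ≤ t'`.
-/

open Complex

theorem turns_eq_sum {n : ℕ} (d : Fin (n + 1) → Bool) :
    turns d = ∑ i : Fin n, if d i.castSucc ≠ d i.succ then 1 else 0 := by
  rw [turns, Finset.card_filter, Finset.sum_range_succ, ← Fin.sum_univ_eq_sum_range]
  simp [Fin.castSucc, Fin.succ, Fin.castAdd, Fin.castLE]

theorem turns_snoc {n : ℕ} (d : Fin (n + 1) → Bool) (b : Bool) :
    turns (Fin.snoc d b : Fin (n + 2) → Bool) = turns d + if d (Fin.last n) ≠ b then 1 else 0 := by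
  rw [turns_eq_sum, turns_eq_sum, Fin.sum_univ_castSucc]
  simp only [Fin.succ_castSucc, Fin.snoc_castSucc, Fin.succ_last, Fin.snoc_last]

theorem even_turns_iff {n : ℕ} (d : Fin (n + 1) → Bool) :
    Even (turns d) ↔ d 0 = d (Fin.last n) := by
  induction n with
  | zero => simp [turns_eq_sum, Fin.last]
  | succ n ih =>
    induction d using Fin.snocCases with
    | snoc e b =>
      rw [turns_snoc, Fin.snoc_last, ← Fin.castSucc_zero, Fin.snoc_castSucc]
      cases h0 : e 0 <;> cases hl : e (Fin.last n) <;> cases b <;>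
        simp_all [Nat.even_add_one]

theorem endpt_snoc {n : ℕ} (d : Fin n → Bool) (b : Bool) :
    endpt (Fin.snoc d b : Fin (n + 1) → Bool) = endpt d + if b then 1 else -1 := by
  simp [endpt, Fin.sum_univ_castSucc]

theorem abs_endpt_le {n : ℕ} (d : Fin n → Bool) : |endpt d| ≤ n := by
  calc |endpt d| ≤ ∑ i, |if d i then (1 : ℤ) else -1| := Finset.abs_sum_le_sum_abs _ _
    _ = n := by simp [apply_ite]

theorem pathsTo_eq_empty_of_lt_abs {x : ℤ} {n : ℕ} (h : (n : ℤ) < |x|) : pathsTo x n = ∅ :=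
  Finset.filter_eq_empty_iff.2 fun d _ hd => (abs_endpt_le d).not_gt (hd.2 ▸ h)

theorem mem_pathsTo_succ {x : ℤ} {n : ℕ} {d : Fin (n + 1) → Bool} :
    d ∈ pathsTo x (n + 1) ↔ d 0 = true ∧ endpt d = x := by
  simp [pathsTo]

theorem snoc_mem_pathsTo {x : ℤ} {n : ℕ} {e : Fin (n + 1) → Bool} {b : Bool} :
    (Fin.snoc e b : Fin (n + 2) → Bool) ∈ pathsTo x (n + 2) ↔
      e ∈ pathsTo (x - if b then 1 else -1) (n + 1) := by
  rw [mem_pathsTo_succ, mem_pathsTo_succ, ← Fin.castSucc_zero, Fin.snoc_castSucc, endpt_snoc,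
    eq_sub_iff_add_eq]

theorem sum_pathsTo_add_two {M : Type*} [AddCommMonoid M] (x : ℤ) (n : ℕ)
    (f : (Fin (n + 2) → Bool) → M) :
    ∑ d ∈ pathsTo x (n + 2), f d = ∑ e ∈ pathsTo (x - 1) (n + 1), f (Fin.snoc e true) +
      ∑ e ∈ pathsTo (x + 1) (n + 1), f (Fin.snoc e false) := by
  rw [← Fintype.sum_extend_by_zero, ← (Fin.snocEquiv _).sum_comp, Fintype.sum_prod_type,
    Fintype.sum_bool]
  simp only [Fin.snocEquiv, Equiv.coe_fn_mk, snoc_mem_pathsTo, Fintype.sum_extend_by_zero,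
    if_true, Bool.false_eq_true, if_false, sub_neg_eq_add]

theorem neg_I_mul_sq (c : ℝ) : (-I * c) ^ 2 = ((-c ^ 2 : ℝ) : ℂ) := by
  push_cast
  ring_nf
  rw [I_sq]
  ring

theorem im_neg_I_mul_pow_of_even (c : ℝ) {k : ℕ} (hk : Even k) : ((-I * c) ^ k).im = 0 := by
  obtain ⟨j, rfl⟩ := hk
  rw [← two_mul, pow_mul, neg_I_mul_sq, ← ofReal_pow, ofReal_im]

theorem re_neg_I_mul_pow_of_odd (c : ℝ) {k : ℕ} (hk : Odd k) : ((-I * c) ^ k).re = 0 := by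
  obtain ⟨j, rfl⟩ := hk
  rw [pow_succ, pow_mul, neg_I_mul_sq, ← ofReal_pow, re_ofReal_mul]
  simp

theorem last_eq_of_even_turns {n : ℕ} {e : Fin (n + 1) → Bool} (he : e 0 = true)
    (h : Even (turns e)) : e (Fin.last n) = true :=
  he ▸ ((even_turns_iff e).1 h).symm

theorem last_eq_of_odd_turns {n : ℕ} {e : Fin (n + 1) → Bool} (he : e 0 = true)
    (h : Odd (turns e)) : e (Fin.last n) = false := by
  simpa [he] using mt (even_turns_iff e).2 (Nat.not_even_iff_odd.2 h)

theorem neg_I_mul_pow_turns_snoc_true (c : ℝ) {n : ℕ} {e : Fin (n + 1) → Bool} (he : e 0 = true) :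
    (-I * c) ^ turns (Fin.snoc e true : Fin (n + 2) → Bool) =
      (((-I * c) ^ turns e).re + c * ((-I * c) ^ turns e).im : ℝ) := by
  rw [turns_snoc]
  rcases Nat.even_or_odd (turns e) with h | h
  · rw [last_eq_of_even_turns he h, if_neg (not_not_intro rfl), add_zero]
    have hw := im_neg_I_mul_pow_of_even c h
    generalize (-I * c) ^ turns e = w at hw ⊢
    apply Complex.ext <;> simp [hw]
  · rw [last_eq_of_odd_turns he h, if_pos (by decide), pow_succ]
    have hw := re_neg_I_mul_pow_of_odd c h
    generalize (-I * c) ^ turns e = w at hw ⊢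
    apply Complex.ext <;> simp [hw]
    ring

theorem neg_I_mul_pow_turns_snoc_false (c : ℝ) {n : ℕ} {e : Fin (n + 1) → Bool}
    (he : e 0 = true) :
    (-I * c) ^ turns (Fin.snoc e false : Fin (n + 2) → Bool) =
      I * (((-I * c) ^ turns e).im - c * ((-I * c) ^ turns e).re : ℝ) := by
  rw [turns_snoc]
  rcases Nat.even_or_odd (turns e) with h | h
  · rw [last_eq_of_even_turns he h, if_pos (by decide), pow_succ]
    have hw := im_neg_I_mul_pow_of_even c h
    generalize (-I * c) ^ turns e = w at hw ⊢
    apply Complex.ext <;> simp [hw]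
    ring
  · rw [last_eq_of_odd_turns he h, if_neg (not_not_intro rfl), add_zero]
    have hw := re_neg_I_mul_pow_of_odd c h
    generalize (-I * c) ^ turns e = w at hw ⊢
    apply Complex.ext <;> simp [hw]

def pathSum (c : ℝ) (x : ℤ) (n : ℕ) : ℂ :=
  ∑ d ∈ pathsTo x n, (-I * c) ^ turns d

theorem pathSum_eq_zero_of_notMem_Icc (c : ℝ) {x : ℤ} {n : ℕ} (hx : x ∉ Finset.Icc (-n : ℤ) n) :
    pathSum c x n = 0 := by
  rw [Finset.mem_Icc] at hx
  rw [pathSum, pathsTo_eq_empty_of_lt_abs (lt_abs.2 (by omega)), Finset.sum_empty]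

theorem pathSum_one (c : ℝ) (x : ℤ) : pathSum c x 1 = if x = 1 then 1 else 0 := by
  rw [pathSum, ← Fintype.sum_extend_by_zero, ← (Equiv.funUnique (Fin 1) Bool).symm.sum_comp,
    Fintype.sum_bool]
  simp [mem_pathsTo_succ, endpt, turns_eq_sum, eq_comm]

theorem pathSum_add_two (c : ℝ) (x : ℤ) (n : ℕ) :
    pathSum c x (n + 2) =
      ((pathSum c (x - 1) (n + 1)).re + c * (pathSum c (x - 1) (n + 1)).im : ℝ) +
        I * ((pathSum c (x + 1) (n + 1)).im - c * (pathSum c (x + 1) (n + 1)).re : ℝ) := by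
  rw [pathSum, sum_pathsTo_add_two,
    Finset.sum_congr rfl fun e he => neg_I_mul_pow_turns_snoc_true c (mem_pathsTo_succ.1 he).1,
    Finset.sum_congr rfl fun e he => neg_I_mul_pow_turns_snoc_false c (mem_pathsTo_succ.1 he).1,
    ← Finset.mul_sum]
  simp only [pathSum, re_sum, im_sum, ← ofReal_sum, Finset.sum_add_distrib, Finset.sum_sub_distrib,
    Finset.mul_sum]

theorem re_pathSum_add_two (c : ℝ) (x : ℤ) (n : ℕ) :
    (pathSum c x (n + 2)).re =
      (pathSum c (x - 1) (n + 1)).re + c * (pathSum c (x - 1) (n + 1)).im := by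
  simp [pathSum_add_two]

theorem im_pathSum_add_two (c : ℝ) (x : ℤ) (n : ℕ) :
    (pathSum c x (n + 2)).im =
      (pathSum c (x + 1) (n + 1)).im - c * (pathSum c (x + 1) (n + 1)).re := by
  simp [pathSum_add_two]

theorem pathSum_huygens (c : ℝ) (n j : ℕ) (s : Finset ℤ)
    (hs : ∀ y ∉ s, pathSum c y (n + 1) = 0) (x : ℤ) :
    (pathSum c x (n + 1 + j)).im = ∑ y ∈ s,
      ((pathSum c y (n + 1)).re * (pathSum c (x - y + 1) (j + 1)).im +
        (pathSum c y (n + 1)).im * (pathSum c (y - x + 1) (j + 1)).re) ∧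
    (pathSum c x (n + 1 + j)).re = ∑ y ∈ s,
      ((pathSum c y (n + 1)).re * (pathSum c (x - y + 1) (j + 1)).re -
        (pathSum c y (n + 1)).im * (pathSum c (y - x + 1) (j + 1)).im) := by
  induction j generalizing x with
  | zero =>
    by_cases hx : x ∈ s <;> simp [pathSum_one, apply_ite, sub_eq_zero, hx, hs]
  | succ j ih =>
    rw [show n + 1 + (j + 1) = n + j + 2 by ring, im_pathSum_add_two, re_pathSum_add_two,
      show n + j + 1 = n + 1 + j by ring, (ih (x + 1)).1, (ih (x + 1)).2, (ih (x - 1)).1,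
      (ih (x - 1)).2, Finset.mul_sum, Finset.mul_sum, ← Finset.sum_sub_distrib,
      ← Finset.sum_add_distrib]
    constructor <;> refine Finset.sum_congr rfl fun y _ => ?_
    · rw [im_pathSum_add_two, re_pathSum_add_two, show x + 1 - y + 1 = x - y + 1 + 1 by ring,
        show y - (x + 1) + 1 = y - x + 1 - 1 by ring]
      ring
    · rw [im_pathSum_add_two, re_pathSum_add_two, show x - 1 - y + 1 = x - y + 1 - 1 by ring,
        show y - (x - 1) + 1 = y - x + 1 + 1 by ring]
      ring

def massFactor (m ε : ℝ) (t : ℤ) : ℝ :=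
  (1 + m ^ 2 * ε ^ 2) ^ ((1 - t) / 2 : ℝ)

theorem massFactor_mul (m ε : ℝ) (t t' : ℤ) :
    massFactor m ε t' * massFactor m ε (t - t' + 1) = massFactor m ε t := by
  rw [massFactor, massFactor, massFactor, ← Real.rpow_add (by positivity)]
  push_cast
  ring_nf

theorem am_eq_massFactor_mul_pathSum (m ε : ℝ) (x t : ℤ) :
    am x t m ε = massFactor m ε t * I * pathSum (m * ε) x t.toNat := by
  rw [am, massFactor, ofReal_cpow (by positivity), pathSum]
  push_cast
  rfl

theorem re_am (m ε : ℝ) (x t : ℤ) :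
    (am x t m ε).re = -massFactor m ε t * (pathSum (m * ε) x t.toNat).im := by
  simp [am_eq_massFactor_mul_pathSum]

theorem im_am (m ε : ℝ) (x t : ℤ) :
    (am x t m ε).im = massFactor m ε t * (pathSum (m * ε) x t.toNat).re := by
  simp [am_eq_massFactor_mul_pathSum]

theorem huygens_principle_general (m ε : ℝ)
    (x t t' : ℤ) (h1 : t' < t) (h2 : 0 < t') :
    (am x t m ε).re = ∑' x' : ℤ,
      ((am x' t' m ε).im * (am (x - x' + 1) (t - t' + 1) m ε).re +
       (am x' t' m ε).re * (am (x' - x + 1) (t - t' + 1) m ε).im) ∧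
    (am x t m ε).im = ∑' x' : ℤ,
      ((am x' t' m ε).im * (am (x - x' + 1) (t - t' + 1) m ε).im -
       (am x' t' m ε).re * (am (x' - x + 1) (t - t' + 1) m ε).re) := by
  obtain ⟨n, hn⟩ : ∃ n : ℕ, t'.toNat = n + 1 := ⟨t'.toNat - 1, by omega⟩
  obtain ⟨j, ht, hΔ⟩ : ∃ j : ℕ, t.toNat = n + 1 + j ∧ (t - t' + 1).toNat = j + 1 :=
    ⟨(t - t').toNat, by omega, by omega⟩
  set s := Finset.Icc (-((n + 1 : ℕ) : ℤ)) (n + 1 : ℕ)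
  have hs : ∀ y ∉ s, pathSum (m * ε) y (n + 1) = 0 := fun y => pathSum_eq_zero_of_notMem_Icc _
  obtain ⟨him, hre⟩ := pathSum_huygens (m * ε) n j s hs x
  have hR := massFactor_mul m ε t t'
  refine ⟨?_, ?_⟩ <;>
  · rw [tsum_eq_sum (s := s) fun y hy => by simp [re_am, im_am, hn, hs y hy]]
    simp only [re_am, im_am, hn, ht, hΔ, him, hre, Finset.mul_sum]
    refine Finset.sum_congr rfl fun y _ => ?_
    rw [← hR]
    ring

/-- Huygens' principle for Feynman checkers with mass m and lattice step ε. -/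
theorem huygens_principle (m ε : ℝ) (hε : 0 < ε) (hm : 0 ≤ m)
    (x t t' : ℤ) (h1 : t' < t) (h2 : 0 < t') :
    (am x t m ε).re = ∑' x' : ℤ,
      ((am x' t' m ε).im * (am (x - x' + 1) (t - t' + 1) m ε).re +
       (am x' t' m ε).re * (am (x' - x + 1) (t - t' + 1) m ε).im) ∧
    (am x t m ε).im = ∑' x' : ℤ,
      ((am x' t' m ε).im * (am (x - x' + 1) (t - t' + 1) m ε).im -
       (am x' t' m ε).re * (am (x' - x + 1) (t - t' + 1) m ε).re) :=
  huygens_principle_general m ε x t t' h1 h2
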